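/- arXiv:2309.04123 — 2 statements merged into one kernel-verified Lean document; each statement's English description precedes it below -/
import Mathlib

section
/- Let (𝒜, φ) be a non-commutative probability space and, for each N ≥ 1, let a_1, …, a_N ∈ 𝒜 satisfy φ(a_i) = 0, φ(a_i²) = 1, have uniformly bounded moments of all orders (for each n ≥ 1, sup_{i,N} |φ(a_i^n)| < ∞), and be BMT independent with respect to the digraph G_N = ([N], E_N) with E_N = {(j, i) : i < j}. Then for every integer k ≥ 1, lim_{N→∞} φ(((a_1 + ⋯ + a_N)/√N)^{2k}) = (2k choose k)/2^k, and the odd moments tend to 0; i.e., the normalized sums converge in moments to the arcsine distribution on (−√2, √2). -/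
open scoped Classical
open Filter

noncomputable section

/-- The relation defining the kernel of `f` restricted to the index set `S`,
subordinated to the digraph with edge relation `E`: `k ∼ k'` iff `f k = f k'` and
every `l ∈ S` strictly between `k` and `k'` with `f l ≠ f k` satisfies `(f l, f k) ∈ E`. -/
def kerGRelOn {m : ℕ} {V : Type*} (E : V → V → Prop) (f : Fin m → V)
    (S : Finset (Fin m)) (k k' : Fin m) : Prop :=
  f k = f k' ∧ ∀ l ∈ S, min k k' < l → l < max k k' → f l ≠ f k → E (f l) (f k)

/-- The blocks of the kernel of `f|_S` subordinated to the digraph `E`. -/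
def kerGBlocks {m : ℕ} {V : Type*} (E : V → V → Prop) (f : Fin m → V)
    (S : Finset (Fin m)) : Finset (Finset (Fin m)) :=
  S.image fun k => S.filter fun k' => kerGRelOn E f S k k'

/-- The blocks of the plain kernel `ker[f]` of `f : [m] → V`. -/
def kerBlocks {m : ℕ} {V : Type*} (f : Fin m → V) : Finset (Finset (Fin m)) :=
  Finset.univ.image fun k => Finset.univ.filter fun k' => f k = f k'

/-- The product of `a k` for `k ∈ B`, taken in increasing order of `k`. -/
def blockProd {A : Type*} [Monoid A] {m : ℕ} (a : Fin m → A) (B : Finset (Fin m)) : A :=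
  ((B.sort (· ≤ ·)).map a).prod

/-- The edge set of the nesting-crossing graph of the partition `π`, relabeled along `f`:
the pair `(f-label of B, f-label of C)` is an edge whenever `B ≠ C` are blocks of `π` and
some `l ∈ B` lies strictly between two elements (equivalently, between min and max) of `C`. -/
def nestCrossEdges {m : ℕ} {V : Type*} (π : Finset (Finset (Fin m))) (f : Fin m → V) :
    Set (V × V) :=
  { p | ∃ B ∈ π, ∃ C ∈ π, B ≠ C ∧
      (∃ l ∈ B, ∃ c₁ ∈ C, ∃ c₂ ∈ C, c₁ < l ∧ l < c₂) ∧
      (∃ k ∈ B, f k = p.1) ∧ (∃ k' ∈ C, f k' = p.2) }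

/-- A family of (non-unital) subalgebras of a non-commutative probability space `(𝒜, φ)`
is BMT independent with respect to the digraph `E` on the index set `I`. -/
def BMTIndep {𝒜 : Type*} [Ring 𝒜] [Algebra ℂ 𝒜] (φ : 𝒜 →ₗ[ℂ] ℂ)
    {I : Type*} (E : I → I → Prop) (A : I → NonUnitalSubalgebra ℂ 𝒜) : Prop :=
  ∀ (m : ℕ), 1 ≤ m → ∀ (idx : Fin m → I) (a : Fin m → 𝒜),
    (∀ k, a k ∈ A (idx k)) →
    φ (List.ofFn a).prod = ∏ B ∈ kerGBlocks E idx Finset.univ, φ (blockProd a B)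

/-- Random variables `a 0, …, a (N-1)` are BMT independent with respect to the digraph `E`. -/
def BMTIndepVars {𝒜 : Type*} [Ring 𝒜] [Algebra ℂ 𝒜] (φ : 𝒜 →ₗ[ℂ] ℂ)
    {N : ℕ} (E : Fin N → Fin N → Prop) (a : Fin N → 𝒜) : Prop :=
  ∀ (m : ℕ) (idx : Fin m → Fin N),
    φ (List.ofFn fun k => a (idx k)).prod
      = ∏ B ∈ kerGBlocks E idx Finset.univ, φ (blockProd (fun k => a (idx k)) B)

/-!
Expand `(a₁ + ⋯ + a_N) ^ m` as a sum over words `idx : [m] → [N]`. BMT independence factors `φ`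
of each word over the blocks of `ker_G[idx]`, a block `B` contributing `φ (a_i ^ #B)`. For the
digraph `E = {(j, i) : i < j}`, a word with a singleton block contributes `0`. A word in which
every letter occurs exactly twice and every letter strictly between two equal letters is larger
(a monotone pairing) has the pairs as blocks and contributes `1`. Every other word has all letter
multiplicities `≥ 2` and one `≥ 3`, so it uses at most `(m - 1) / 2` letters; there are
`O(N ^ ((m - 1) / 2))` such words, with uniformly bounded contributions.

In a monotone pairing over `[N + 1]` the letter `N + 1`, if used, occupies two adjacent
positions. Hence the number `P(N, m)` of monotone pairings of length `m` over `[N]` satisfies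
`P(N + 1, m + 2) = P(N, m + 2) + (m + 1) P(N, m)`, so `P(N, 2k) = (N choose k) (2k - 1)!!`, and
`(N choose k) (2k - 1)!! / N ^ k → (2k - 1)!! / k! = (2k choose k) / 2 ^ k`.
-/

open Finset Topology

section Fibers

variable {α β : Type*} [Fintype α] [DecidableEq β]

lemma card_eq_two_mul_card_image_of_card_fiber_eq_two {f : α → β}
    (hf : ∀ a, #{b | f b = f a} = 2) : Fintype.card α = 2 * #(univ.image f) := by
  rw [← card_univ, card_eq_sum_card_image f univ, mul_comm, ← smul_eq_mul, ← sum_const]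
  refine sum_congr rfl fun b hb => ?_
  obtain ⟨a, -, rfl⟩ := mem_image.1 hb
  exact hf a

lemma two_mul_card_image_lt_of_card_fiber {f : α → β} (hf : ∀ a, 2 ≤ #{b | f b = f a})
    (a₀ : α) (ha₀ : 2 < #{b | f b = f a₀}) : 2 * #(univ.image f) < Fintype.card α := by
  rw [← card_univ, card_eq_sum_card_image f univ, mul_comm, ← smul_eq_mul, ← sum_const]
  refine sum_lt_sum (fun b hb => ?_) ⟨f a₀, mem_image_of_mem f (mem_univ a₀), ha₀⟩
  obtain ⟨a, -, rfl⟩ := mem_image.1 hb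
  exact hf a

lemma card_filter_card_image_le [Nonempty α] [Fintype β] (r : ℕ) :
    #{f : α → β | #(univ.image f) ≤ r} ≤ Fintype.card β ^ r * r ^ Fintype.card α := by
  have hsurj : Set.SurjOn (fun gh : (Fin r → β) × (α → Fin r) => gh.1 ∘ gh.2)
      ↑(univ : Finset ((Fin r → β) × (α → Fin r)))
      ↑({f : α → β | #(univ.image f) ≤ r} : Finset _) := by
    intro f hf
    simp only [coe_filter, mem_univ, true_and, Set.mem_ofPred_eq] at hf
    let e : univ.image f ↪ Fin r := (univ.image f).equivFin.toEmbedding.trans (Fin.castLEEmb hf)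
    let h : α → Fin r := fun a => e ⟨f a, mem_image_of_mem f (mem_univ a)⟩
    have : Nonempty β := ⟨f (Classical.arbitrary α)⟩
    obtain ⟨g, hg⟩ := (Function.factorsThrough_iff f (f := h)).1 fun a b hab =>
      congrArg Subtype.val (e.injective hab)
    exact ⟨(g, h), by simp, hg.symm⟩
  simpa [Fintype.card_fun] using card_le_card_of_surjOn _ hsurj

end Fibers

section MonotonePairing

variable {m N : ℕ}

structure IsMonotonePairing (w : Fin m → Fin N) : Prop where
  card_fiber : ∀ p, #{q | w q = w p} = 2
  lt_of_between : ∀ p l q, p < l → l < q → w p = w q → w l ≠ w p → w p < w l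

def monotonePairingCount (N m : ℕ) : ℕ := #{w : Fin m → Fin N | IsMonotonePairing w}

namespace IsMonotonePairing

variable {w : Fin m → Fin N}

lemma even (hw : IsMonotonePairing w) : Even m := by
  have := card_eq_two_mul_card_image_of_card_fiber_eq_two hw.card_fiber
  rw [Fintype.card_fin] at this
  exact ⟨_, this.trans (two_mul _)⟩

lemma eq_or_eq_of_eq (hw : IsMonotonePairing w) {p q r : Fin m} (hpq : p ≠ q)
    (hq : w q = w p) (hr : w r = w p) : r = p ∨ r = q := by
  have hfib : ({p, q} : Finset (Fin m)) = ({t | w t = w p} : Finset (Fin m)) :=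
    eq_of_subset_of_card_le (by simp [insert_subset_iff, hq]) (by rw [hw.card_fiber, card_pair hpq])
  simpa [← hfib] using (show r ∈ ({t | w t = w p} : Finset _) by simpa using hr)

lemma val_eq_succ_of_eq_last {w : Fin m → Fin (N + 1)} (hw : IsMonotonePairing w) {p q : Fin m}
    (hpq : p < q) (hp : w p = Fin.last N) (hq : w q = Fin.last N) : q.val = p.val + 1 := by
  by_contra hne
  have hl : p.val + 1 < m := by omega
  set l : Fin m := ⟨p.val + 1, hl⟩
  have hpl : p < l := Fin.lt_def.2 (by simp [l])
  have hlq : l < q := Fin.lt_def.2 (by simp only [l]; omega)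
  by_cases hwl : w l = w p
  · rcases hw.eq_or_eq_of_eq hpq.ne (hq.trans hp.symm) hwl with h | h
    · exact hpl.ne' h
    · exact hlq.ne h
  · exact (hw.lt_of_between p l q hpl hlq (hp.trans hq.symm) hwl).not_ge (hp ▸ Fin.le_last _)

end IsMonotonePairing

lemma isMonotonePairing_comp_iff {N' : ℕ} {g : Fin N → Fin N'} (hg : StrictMono g)
    {u : Fin m → Fin N} : IsMonotonePairing (g ∘ u) ↔ IsMonotonePairing u := by
  have hfib : ∀ p, #{q | g (u q) = g (u p)} = #{q | u q = u p} := by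
    simp [hg.injective.eq_iff]
  constructor
  · intro ⟨h₁, h₂⟩
    refine ⟨fun p => hfib p ▸ h₁ p, fun p l q hpl hlq hpq hlp => ?_⟩
    exact hg.lt_iff_lt.1 (h₂ p l q hpl hlq (congrArg g hpq) (hg.injective.ne hlp))
  · intro ⟨h₁, h₂⟩
    refine ⟨fun p => (hfib p).trans (h₁ p), fun p l q hpl hlq hpq hlp => ?_⟩
    exact hg.lt_iff_lt.2 (h₂ p l q hpl hlq (hg.injective hpq) fun h => hlp (congrArg g h))

lemma card_fiber_comp_of_forall_mem_range {M : ℕ} {w : Fin M → Fin N} {s : Fin m ↪ Fin M}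
    (hs : ∀ p t, w t = w (s p) → t ∈ Set.range s) (p : Fin m) :
    #{q | w (s q) = w (s p)} = #{t | w t = w (s p)} := by
  rw [← card_map s]
  congr 1
  ext t
  simp only [Finset.mem_map, mem_filter, mem_univ, true_and]
  constructor
  · rintro ⟨q, hq, rfl⟩
    exact hq
  · intro ht
    obtain ⟨q, rfl⟩ := hs p t ht
    exact ⟨q, ht, rfl⟩

lemma IsMonotonePairing.comp_of_forall_mem_range {M : ℕ} {w : Fin M → Fin N}
    (hw : IsMonotonePairing w) {s : Fin m ↪o Fin M}
    (hs : ∀ p t, w t = w (s p) → t ∈ Set.range s) : IsMonotonePairing (w ∘ s) where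
  card_fiber p := (card_fiber_comp_of_forall_mem_range (s := s.toEmbedding) hs p).trans
    (hw.card_fiber (s p))
  lt_of_between _ _ _ hpl hlq :=
    hw.lt_of_between _ _ _ (s.lt_iff_lt.2 hpl) (s.lt_iff_lt.2 hlq)

lemma monotonePairingCount_of_odd (hm : Odd m) : monotonePairingCount N m = 0 := by
  rw [monotonePairingCount, card_eq_zero, filter_eq_empty_iff]
  exact fun w _ hw => Nat.not_even_iff_odd.2 hm hw.even

end MonotonePairing

section Recursion

variable {m N : ℕ}

def skipPair (j : Fin (m + 1)) : Fin m ↪o Fin (m + 2) :=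
  OrderEmbedding.ofStrictMono (fun i => ⟨if i.val < j.val then i.val else i.val + 2, by
    split_ifs <;> omega⟩) (by intro a b hab; simp only [Fin.lt_def] at hab ⊢; split_ifs <;> omega)

lemma val_skipPair (j : Fin (m + 1)) (i : Fin m) :
    (skipPair j i).val = if i.val < j.val then i.val else i.val + 2 :=
  rfl

lemma mem_range_skipPair {j : Fin (m + 1)} {t : Fin (m + 2)} :
    t ∈ Set.range (skipPair j) ↔ t ≠ j.castSucc ∧ t ≠ j.succ := by
  simp only [Set.mem_range, ne_eq, Fin.ext_iff, val_skipPair, Fin.val_castSucc, Fin.val_succ]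
  constructor
  · rintro ⟨i, hi⟩
    split_ifs at hi <;> omega
  · intro ht
    rcases Nat.lt_or_ge t.val j.val with h | h
    · exact ⟨⟨t.val, by omega⟩, by simp [h]⟩
    · exact ⟨⟨t.val - 2, by omega⟩, by simp only; split_ifs <;> omega⟩

def insertLastPair (j : Fin (m + 1)) (u : Fin m → Fin N) : Fin (m + 2) → Fin (N + 1) :=
  Function.extend (skipPair j) (Fin.castSucc ∘ u) fun _ => Fin.last N

lemma insertLastPair_skipPair (j : Fin (m + 1)) (u : Fin m → Fin N) (i : Fin m) :
    insertLastPair j u (skipPair j i) = (u i).castSucc :=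
  (skipPair j).injective.extend_apply _ _ i

lemma insertLastPair_eq_last_iff {j : Fin (m + 1)} {u : Fin m → Fin N} {t : Fin (m + 2)} :
    insertLastPair j u t = Fin.last N ↔ t = j.castSucc ∨ t = j.succ := by
  by_cases ht : t ∈ Set.range (skipPair j)
  · obtain ⟨i, rfl⟩ := ht
    have := mem_range_skipPair.1 (Set.mem_range_self (f := skipPair j) i)
    simp [insertLastPair_skipPair, (Fin.castSucc_lt_last _).ne, this]
  · rw [insertLastPair, Function.extend_apply' _ _ _ ht]
    rw [mem_range_skipPair] at ht
    tauto

lemma insertLastPair_injective (j : Fin (m + 1)) :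
    Function.Injective (insertLastPair (N := N) j) := fun u v huv => funext fun i =>
  Fin.castSucc_injective _ <| by
    rw [← insertLastPair_skipPair, ← insertLastPair_skipPair, huv]

lemma insertLastPair_eq_last_iff_notMem_range {j : Fin (m + 1)} {u : Fin m → Fin N}
    {t : Fin (m + 2)} : insertLastPair j u t = Fin.last N ↔ t ∉ Set.range (skipPair j) := by
  rw [insertLastPair_eq_last_iff, mem_range_skipPair]
  tauto

lemma mem_range_of_insertLastPair_eq {j : Fin (m + 1)} {u : Fin m → Fin N} {p : Fin m}
    {t : Fin (m + 2)} (ht : insertLastPair j u t = insertLastPair j u (skipPair j p)) :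
    t ∈ Set.range (skipPair j) := by
  by_contra h
  rw [← insertLastPair_eq_last_iff_notMem_range, ht, insertLastPair_skipPair] at h
  exact (Fin.castSucc_lt_last (u p)).ne h

lemma castSucc_comp_eq_insertLastPair_comp (j : Fin (m + 1)) (u : Fin m → Fin N) :
    Fin.castSucc ∘ u = insertLastPair j u ∘ skipPair j :=
  funext fun i => (insertLastPair_skipPair j u i).symm

lemma IsMonotonePairing.of_insertLastPair {j : Fin (m + 1)} {u : Fin m → Fin N}
    (h : IsMonotonePairing (insertLastPair j u)) : IsMonotonePairing u := by
  rw [← isMonotonePairing_comp_iff Fin.strictMono_castSucc,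
    castSucc_comp_eq_insertLastPair_comp j]
  exact h.comp_of_forall_mem_range fun _ _ => mem_range_of_insertLastPair_eq

lemma isMonotonePairing_insertLastPair {j : Fin (m + 1)} {u : Fin m → Fin N}
    (h : IsMonotonePairing u) : IsMonotonePairing (insertLastPair j u) := by
  set w := insertLastPair j u
  rw [← isMonotonePairing_comp_iff Fin.strictMono_castSucc,
    castSucc_comp_eq_insertLastPair_comp j] at h
  refine ⟨fun p => ?_, fun p l q hpl hlq hpq hlp => ?_⟩
  · by_cases hp : p ∈ Set.range (skipPair j)
    · obtain ⟨p, rfl⟩ := hp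
      exact (card_fiber_comp_of_forall_mem_range (s := (skipPair j).toEmbedding)
        (fun _ _ => mem_range_of_insertLastPair_eq) p).symm.trans (h.card_fiber p)
    · have hfib : ({t | w t = w p} : Finset _) = {j.castSucc, j.succ} := by
        ext t
        simp [insertLastPair_eq_last_iff_notMem_range.2 hp, w, insertLastPair_eq_last_iff]
      rw [hfib, card_pair (Fin.ext_iff.not.2 (by simp))]
  by_cases hp : w p = Fin.last N
  · have hp' := insertLastPair_eq_last_iff.1 hp
    have hq' := insertLastPair_eq_last_iff.1 (hpq ▸ hp)
    simp only [Fin.lt_def, Fin.ext_iff, Fin.val_castSucc, Fin.val_succ] at hp' hq' hpl hlq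
    omega
  by_cases hl : w l = Fin.last N
  · exact hl ▸ lt_of_le_of_ne (Fin.le_last _) hp
  obtain ⟨p, rfl⟩ := not_not.1 (mt insertLastPair_eq_last_iff_notMem_range.2 hp)
  obtain ⟨l, rfl⟩ := not_not.1 (mt insertLastPair_eq_last_iff_notMem_range.2 hl)
  obtain ⟨q, rfl⟩ := not_not.1 (mt insertLastPair_eq_last_iff_notMem_range.2 (hpq ▸ hp))
  exact h.lt_of_between p l q ((skipPair j).lt_iff_lt.1 hpl) ((skipPair j).lt_iff_lt.1 hlq)
    hpq hlp

lemma IsMonotonePairing.exists_eq_last_pair {w : Fin (m + 2) → Fin (N + 1)}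
    (hw : IsMonotonePairing w) {t : Fin (m + 2)} (ht : w t = Fin.last N) :
    ∃ j : Fin (m + 1), w j.castSucc = Fin.last N ∧ w j.succ = Fin.last N := by
  have adjacent : ∀ p q, p < q → w p = Fin.last N → w q = Fin.last N →
      ∃ j : Fin (m + 1), w j.castSucc = Fin.last N ∧ w j.succ = Fin.last N := by
    intro p q hpq hp hq
    have hq' := hw.val_eq_succ_of_eq_last hpq hp hq
    refine ⟨p.castPred (Fin.ne_last_of_lt hpq), by simpa using hp, ?_⟩
    rwa [show (p.castPred (Fin.ne_last_of_lt hpq)).succ = q from Fin.ext (by simp [hq'])]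
  obtain ⟨t', ht', hne⟩ := exists_mem_ne (s := ({q | w q = w t} : Finset _))
    (by rw [hw.card_fiber]; norm_num) t
  have ht'' : w t' = Fin.last N := by simpa [ht] using ht'
  rcases lt_or_gt_of_ne hne with h | h
  · exact adjacent t' t h ht'' ht
  · exact adjacent t t' h ht ht''

lemma image_insertLastPair (j : Fin (m + 1)) :
    ({u : Fin m → Fin N | IsMonotonePairing u} : Finset _).image (insertLastPair j) =
      ({w | IsMonotonePairing w ∧ w j.castSucc = Fin.last N ∧ w j.succ = Fin.last N} :
        Finset _) := by
  ext w
  simp only [mem_image, mem_filter, mem_univ, true_and]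
  constructor
  · rintro ⟨u, hu, rfl⟩
    exact ⟨isMonotonePairing_insertLastPair hu, insertLastPair_eq_last_iff.2 (.inl rfl),
      insertLastPair_eq_last_iff.2 (.inr rfl)⟩
  rintro ⟨hw, hj, hj'⟩
  have hlast : ∀ t, w t = Fin.last N ↔ t = j.castSucc ∨ t = j.succ := fun t => by
    refine ⟨fun ht => hw.eq_or_eq_of_eq (Fin.ext_iff.not.2 (by simp)) (hj'.trans hj.symm)
      (ht.trans hj.symm), ?_⟩
    rintro (rfl | rfl) <;> assumption
  have hne : ∀ i, w (skipPair j i) ≠ Fin.last N := fun i h =>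
    (mem_range_skipPair.1 (Set.mem_range_self i)).elim (fun h₁ h₂ => ((hlast _).1 h).elim h₁ h₂)
  have hins : insertLastPair j (fun i => (w (skipPair j i)).castPred (hne i)) = w := by
    funext t
    by_cases ht : t ∈ Set.range (skipPair j)
    · obtain ⟨i, rfl⟩ := ht
      simp [insertLastPair_skipPair]
    · rw [mem_range_skipPair, not_and_or, not_not, not_not] at ht
      rw [insertLastPair_eq_last_iff.2 ht, eq_comm, hlast]
      exact ht
  exact ⟨_, (hins ▸ hw).of_insertLastPair, hins⟩

lemma image_castSucc_comp :
    ({u : Fin m → Fin N | IsMonotonePairing u} : Finset _).image (Fin.castSucc ∘ ·) =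
      ({w | IsMonotonePairing w ∧ ∀ t, w t ≠ Fin.last N} : Finset _) := by
  ext w
  simp only [mem_image, mem_filter, mem_univ, true_and]
  constructor
  · rintro ⟨u, hu, rfl⟩
    exact ⟨(isMonotonePairing_comp_iff Fin.strictMono_castSucc).2 hu,
      fun t => (Fin.castSucc_lt_last _).ne⟩
  · rintro ⟨hw, hne⟩
    have hu : Fin.castSucc ∘ (fun t => (w t).castPred (hne t)) = w := funext fun t => by simp
    exact ⟨_, (isMonotonePairing_comp_iff Fin.strictMono_castSucc).1 (by rwa [hu]), hu⟩

lemma pairwiseDisjoint_image_insertLastPair :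
    Set.PairwiseDisjoint ↑(univ : Finset (Fin (m + 1))) fun j =>
      ({u : Fin m → Fin N | IsMonotonePairing u} : Finset _).image (insertLastPair j) := by
  intro j _ j' _ hjj'
  refine disjoint_left.2 fun w hw hw' => hjj' ?_
  obtain ⟨u, -, rfl⟩ := mem_image.1 hw
  obtain ⟨u', -, hu'⟩ := mem_image.1 hw'
  have h₁ := insertLastPair_eq_last_iff.1 (hu' ▸ insertLastPair_eq_last_iff.2 (.inl rfl))
  have h₂ := insertLastPair_eq_last_iff.1 (hu' ▸ insertLastPair_eq_last_iff.2 (.inr rfl))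
  simp only [Fin.ext_iff, Fin.val_castSucc, Fin.val_succ] at h₁ h₂
  exact Fin.ext (by omega)

lemma monotonePairingCount_succ_add_two (N m : ℕ) :
    monotonePairingCount (N + 1) (m + 2) =
      monotonePairingCount N (m + 2) + (m + 1) * monotonePairingCount N m := by
  have hnolast : #({w : Fin (m + 2) → Fin (N + 1) | IsMonotonePairing w ∧ ∀ t, w t ≠ Fin.last N} :
      Finset _) = monotonePairingCount N (m + 2) := by
    rw [← image_castSucc_comp, card_image_of_injective _ (Fin.castSucc_injective N).comp_left,
      monotonePairingCount]
  have hlast : ({w : Fin (m + 2) → Fin (N + 1) | IsMonotonePairing w ∧ ¬∀ t, w t ≠ Fin.last N} :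
      Finset _) = univ.biUnion fun j : Fin (m + 1) =>
        ({u | IsMonotonePairing u} : Finset _).image (insertLastPair j) := by
    ext w
    simp only [image_insertLastPair, mem_biUnion, mem_filter, mem_univ, true_and, not_forall,
      not_not]
    constructor
    · rintro ⟨hw, t, ht⟩
      obtain ⟨j, hj⟩ := hw.exists_eq_last_pair ht
      exact ⟨j, hw, hj⟩
    · rintro ⟨j, hw, hj, -⟩
      exact ⟨hw, _, hj⟩
  rw [monotonePairingCount, ← card_filter_add_card_filter_not (fun w => ∀ t, w t ≠ Fin.last N),
    filter_filter, filter_filter, hnolast, hlast,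
    card_biUnion pairwiseDisjoint_image_insertLastPair]
  simp [card_image_of_injective _ (insertLastPair_injective _), monotonePairingCount]

end Recursion

lemma monotonePairingCount_zero_right (N : ℕ) : monotonePairingCount N 0 = 1 := by
  rw [monotonePairingCount, filter_true_of_mem fun w _ => ⟨finZeroElim, finZeroElim⟩]
  rfl

lemma monotonePairingCount_two_mul (N k : ℕ) :
    monotonePairingCount N (2 * k) = N.choose k * (2 * k - 1).doubleFactorial := by
  induction N generalizing k with
  | zero =>
    cases k with
    | zero => simp [monotonePairingCount_zero_right]
    | succ k => simp [monotonePairingCount]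
  | succ N ih =>
    cases k with
    | zero => simp [monotonePairingCount_zero_right]
    | succ k =>
      rw [show 2 * (k + 1) = 2 * k + 2 by ring, monotonePairingCount_succ_add_two,
        ← show 2 * (k + 1) = 2 * k + 2 by ring, ih, ih, Nat.choose_succ_succ',
        show 2 * (k + 1) - 1 = 2 * k + 1 by omega, Nat.doubleFactorial_add_one]
      ring

section KernelBlocks

variable {m : ℕ} {V : Type*} {E : V → V → Prop} {f : Fin m → V}

lemma kerGRelOn_univ_self (k : Fin m) : kerGRelOn E f univ k k :=
  ⟨rfl, fun _ _ h₁ h₂ _ => absurd (h₁.trans h₂) (by simp)⟩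

lemma filter_kerGRelOn_mem_kerGBlocks (k : Fin m) :
    ({k' | kerGRelOn E f univ k k'} : Finset _) ∈ kerGBlocks E f univ :=
  mem_image_of_mem _ (mem_univ k)

lemma filter_kerGRelOn_subset [DecidableEq V] (k : Fin m) :
    ({k' | kerGRelOn E f univ k k'} : Finset _) ⊆ ({k' | f k' = f k} : Finset _) := by
  intro k' hk'
  simp only [mem_filter, mem_univ, true_and] at hk' ⊢
  exact hk'.1.symm

lemma exists_forall_eq_of_mem_kerGBlocks {B : Finset (Fin m)} (hB : B ∈ kerGBlocks E f univ) :
    ∃ v, ∀ t ∈ B, f t = v := by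
  obtain ⟨k, -, rfl⟩ := mem_image.1 hB
  exact ⟨f k, fun t ht => by simpa using (mem_filter.1 ht).2.1.symm⟩

lemma two_le_card_filter_kerGRelOn (h : ∀ B ∈ kerGBlocks E f univ, #B ≠ 1) (k : Fin m) :
    2 ≤ #({k' | kerGRelOn E f univ k k'} : Finset _) := by
  have hpos : 0 < #({k' | kerGRelOn E f univ k k'} : Finset _) :=
    card_pos.2 ⟨k, by simpa using kerGRelOn_univ_self k⟩
  have := h _ (filter_kerGRelOn_mem_kerGBlocks k)
  omega

end KernelBlocks

lemma blockProd_eq_pow {A : Type*} [Monoid A] {m : ℕ} {a : Fin m → A} {B : Finset (Fin m)}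
    {x : A} (h : ∀ t ∈ B, a t = x) : blockProd a B = x ^ #B := by
  rw [blockProd, List.prod_eq_pow_card _ x (by simpa using h), List.length_map, length_sort]

section MonotoneKernel

variable {m N : ℕ} {E : Fin N → Fin N → Prop} {idx : Fin m → Fin N}

lemma kerGRelOn_of_isMonotonePairing (horder : ∀ v w, E v w ↔ w < v)
    (hidx : IsMonotonePairing idx) {p q : Fin m} (hpq : idx p = idx q) :
    kerGRelOn E idx univ p q := by
  have hmin : idx (min p q) = idx p := by
    rcases min_choice p q with h | h <;> rw [h]; exact hpq.symm
  have hmax : idx (max p q) = idx p := by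
    rcases max_choice p q with h | h <;> rw [h]; exact hpq.symm
  refine ⟨hpq, fun l _ hl₁ hl₂ hl => (horder _ _).2 ?_⟩
  rw [← hmin]
  exact hidx.lt_of_between _ l _ hl₁ hl₂ (hmin.trans hmax.symm) (hmin ▸ hl)

lemma card_eq_two_of_mem_kerGBlocks (horder : ∀ v w, E v w ↔ w < v)
    (hidx : IsMonotonePairing idx) {B : Finset (Fin m)} (hB : B ∈ kerGBlocks E idx univ) :
    #B = 2 := by
  obtain ⟨k, -, rfl⟩ := mem_image.1 hB
  rw [← hidx.card_fiber k]
  congr 1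
  ext t
  simp only [mem_filter, mem_univ, true_and]
  exact ⟨fun h => h.1.symm, fun h => kerGRelOn_of_isMonotonePairing horder hidx h.symm⟩

lemma isMonotonePairing_of_card_fiber (horder : ∀ v w, E v w ↔ w < v)
    (hB : ∀ B ∈ kerGBlocks E idx univ, #B ≠ 1) (hfib : ∀ p, #{q | idx q = idx p} = 2) :
    IsMonotonePairing idx := by
  refine ⟨hfib, fun p l q hpl hlq hpq hlp => ?_⟩
  have hblock :
      ({k' | kerGRelOn E idx univ p k'} : Finset _) = ({k' | idx k' = idx p} : Finset _) :=
    eq_of_subset_of_card_le (filter_kerGRelOn_subset p)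
      ((hfib p).trans_le (two_le_card_filter_kerGRelOn hB p))
  have hq : q ∈ ({k' | kerGRelOn E idx univ p k'} : Finset _) := by simp [hblock, hpq]
  simp only [mem_filter, mem_univ, true_and] at hq
  have := hq.2 l (mem_univ l) (by simpa [min_eq_left (hpl.trans hlq).le])
    (by simpa [max_eq_right (hpl.trans hlq).le]) hlp
  exact (horder _ _).1 this

lemma two_mul_card_image_lt (horder : ∀ v w, E v w ↔ w < v)
    (hB : ∀ B ∈ kerGBlocks E idx univ, #B ≠ 1) (hidx : ¬IsMonotonePairing idx) :
    2 * #(univ.image idx) < m := by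
  have hfib : ∀ p, 2 ≤ #{q | idx q = idx p} := fun p =>
    (two_le_card_filter_kerGRelOn hB p).trans (card_le_card (filter_kerGRelOn_subset p))
  obtain ⟨p, hp⟩ : ∃ p, #{q | idx q = idx p} ≠ 2 := by
    by_contra! h
    exact hidx (isMonotonePairing_of_card_fiber horder hB h)
  simpa using two_mul_card_image_lt_of_card_fiber hfib p (lt_of_le_of_ne (hfib p) hp.symm)

end MonotoneKernel

lemma exists_blockProd_eq_pow {A : Type*} [Monoid A] {m N : ℕ} {E : Fin N → Fin N → Prop}
    (a : Fin N → A) {idx : Fin m → Fin N} {B : Finset (Fin m)} (hB : B ∈ kerGBlocks E idx univ) :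
    ∃ i, blockProd (fun k => a (idx k)) B = a i ^ #B := by
  obtain ⟨i, hi⟩ := exists_forall_eq_of_mem_kerGBlocks hB
  exact ⟨i, blockProd_eq_pow fun t ht => by rw [hi t ht]⟩

section Moments

variable {𝒜 : Type*} [Ring 𝒜] [Algebra ℂ 𝒜] (φ : 𝒜 →ₗ[ℂ] ℂ) {m N : ℕ}

lemma sum_pow_eq_sum_prod_ofFn {R ι : Type*} [Semiring R] [Fintype ι] (b : ι → R) (m : ℕ) :
    (∑ i, b i) ^ m = ∑ idx : Fin m → ι, (List.ofFn fun t => b (idx t)).prod := by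
  induction m with
  | zero => simp
  | succ m ih =>
    rw [pow_succ', ih, sum_mul_sum, ← (Fin.consEquiv fun _ => ι).sum_comp, Fintype.sum_prod_type]
    simp [List.ofFn_succ]

def kerGWeight (E : Fin N → Fin N → Prop) (a : Fin N → 𝒜) (idx : Fin m → Fin N) : ℂ :=
  ∏ B ∈ kerGBlocks E idx univ, φ (blockProd (fun k => a (idx k)) B)

variable {φ} {E : Fin N → Fin N → Prop} {a : Fin N → 𝒜}

lemma BMTIndepVars.map_sum_pow (h : BMTIndepVars φ E a) (m : ℕ) :
    φ ((∑ i, a i) ^ m) = ∑ idx : Fin m → Fin N, kerGWeight φ E a idx := by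
  rw [sum_pow_eq_sum_prod_ofFn, map_sum]
  exact sum_congr rfl fun idx _ => h m idx

lemma kerGWeight_eq_zero (hmean : ∀ i, φ (a i) = 0) {idx : Fin m → Fin N}
    {B : Finset (Fin m)} (hB : B ∈ kerGBlocks E idx univ) (hB₁ : #B = 1) :
    kerGWeight φ E a idx = 0 := by
  refine prod_eq_zero hB ?_
  obtain ⟨i, hi⟩ := exists_blockProd_eq_pow a hB
  rw [hi, hB₁, pow_one, hmean]

lemma kerGWeight_eq_one (horder : ∀ v w, E v w ↔ w < v) (hvar : ∀ i, φ (a i * a i) = 1)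
    {idx : Fin m → Fin N} (hidx : IsMonotonePairing idx) : kerGWeight φ E a idx = 1 := by
  refine prod_eq_one fun B hB => ?_
  obtain ⟨i, hi⟩ := exists_blockProd_eq_pow a hB
  rw [hi, card_eq_two_of_mem_kerGBlocks horder hidx hB, pow_two, hvar]

lemma norm_kerGWeight_le {C : ℝ} (hC₁ : 1 ≤ C) (hC : ∀ n ≤ m, ∀ i, ‖φ (a i ^ n)‖ ≤ C)
    (idx : Fin m → Fin N) : ‖kerGWeight φ E a idx‖ ≤ C ^ m := by
  rw [kerGWeight, norm_prod]
  calc ∏ B ∈ kerGBlocks E idx univ, ‖φ (blockProd (fun k => a (idx k)) B)‖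
      ≤ ∏ _B ∈ kerGBlocks E idx univ, C := by
        refine prod_le_prod (fun _ _ => norm_nonneg _) fun B hB => ?_
        obtain ⟨i, hi⟩ := exists_blockProd_eq_pow a hB
        exact hi ▸ hC _ (card_le_univ B |>.trans_eq (Fintype.card_fin m)) i
    _ = C ^ #(kerGBlocks E idx univ) := prod_const C
    _ ≤ C ^ m := pow_le_pow_right₀ hC₁ (card_image_le.trans_eq (card_fin m))

theorem norm_map_sum_pow_sub_monotonePairingCount_le (horder : ∀ v w, E v w ↔ w < v)
    (hmean : ∀ i, φ (a i) = 0) (hvar : ∀ i, φ (a i * a i) = 1) (hindep : BMTIndepVars φ E a)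
    (hm : 1 ≤ m) {C : ℝ} (hC₁ : 1 ≤ C) (hC : ∀ n ≤ m, ∀ i, ‖φ (a i ^ n)‖ ≤ C) :
    ‖φ ((∑ i, a i) ^ m) - monotonePairingCount N m‖ ≤
      C ^ m * (((m - 1) / 2 : ℕ) : ℝ) ^ m * (N : ℝ) ^ ((m - 1) / 2) := by
  set r := (m - 1) / 2
  let R : Finset (Fin m → Fin N) :=
    {idx | ¬IsMonotonePairing idx ∧ ∀ B ∈ kerGBlocks E idx univ, #B ≠ 1}
  have hsplit : ∀ idx, kerGWeight φ E a idx =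
      (if IsMonotonePairing idx then 1 else 0) + if idx ∈ R then kerGWeight φ E a idx else 0 := by
    intro idx
    by_cases hidx : IsMonotonePairing idx
    · simp [R, hidx, kerGWeight_eq_one horder hvar hidx]
    by_cases hB : ∃ B ∈ kerGBlocks E idx univ, #B = 1
    · obtain ⟨B, hB, hB₁⟩ := hB
      have : idx ∉ R := by simpa [R] using fun _ => ⟨B, hB, hB₁⟩
      simp [hidx, this, kerGWeight_eq_zero hmean hB hB₁]
    · have : idx ∈ R := by simpa [R, hidx] using hB
      simp [hidx, this]
  have hdiff : φ ((∑ i, a i) ^ m) - monotonePairingCount N m = ∑ idx ∈ R, kerGWeight φ E a idx := by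
    rw [hindep.map_sum_pow, sum_congr rfl fun idx _ => hsplit idx, sum_add_distrib, sum_boole,
      ← sum_filter, filter_mem_eq_inter, univ_inter, monotonePairingCount]
    ring
  have hR : #R ≤ N ^ r * r ^ m := by
    have : Nonempty (Fin m) := ⟨⟨0, hm⟩⟩
    refine (card_le_card fun idx hidx => ?_).trans
      ((card_filter_card_image_le r).trans_eq (by simp))
    simp only [R, mem_filter, mem_univ, true_and] at hidx ⊢
    have := two_mul_card_image_lt horder hidx.2 hidx.1
    omega
  rw [hdiff]
  calc ‖∑ idx ∈ R, kerGWeight φ E a idx‖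
      ≤ ∑ _idx ∈ R, C ^ m :=
        (norm_sum_le _ _).trans (sum_le_sum fun idx _ => norm_kerGWeight_le hC₁ hC idx)
    _ = #R * C ^ m := by rw [sum_const, nsmul_eq_mul]
    _ ≤ (N ^ r * r ^ m : ℕ) * C ^ m := by gcongr
    _ = C ^ m * (r : ℝ) ^ m * (N : ℝ) ^ r := by push_cast; ring

end Moments

lemma exists_one_le_forall_le_of_forall_exists_le {ι : Type*} {f : ℕ → ι → ℝ}
    (h : ∀ n, ∃ C, ∀ x, f n x ≤ C) (m : ℕ) : ∃ C, 1 ≤ C ∧ ∀ n ≤ m, ∀ x, f n x ≤ C := by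
  induction m with
  | zero =>
    obtain ⟨C, hC⟩ := h 0
    exact ⟨max C 1, le_max_right _ _, fun n hn x => by
      rw [Nat.le_zero.1 hn]; exact (hC x).trans (le_max_left _ _)⟩
  | succ m ih =>
    obtain ⟨C, hC₁, hC⟩ := ih
    obtain ⟨D, hD⟩ := h (m + 1)
    refine ⟨max C D, hC₁.trans (le_max_left _ _), fun n hn x => ?_⟩
    rcases Nat.le_succ_iff.1 hn with hn | rfl
    · exact (hC n hn x).trans (le_max_left _ _)
    · exact (hD x).trans (le_max_right _ _)

lemma Nat.two_pow_mul_factorial_mul_doubleFactorial (k : ℕ) :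
    2 ^ k * k.factorial * (2 * k - 1).doubleFactorial = (2 * k).factorial := by
  cases k with
  | zero => rfl
  | succ k =>
    rw [show 2 * (k + 1) = 2 * k + 1 + 1 by ring, Nat.factorial_eq_mul_doubleFactorial (2 * k + 1),
      Nat.add_sub_cancel, show 2 * k + 1 + 1 = 2 * (k + 1) by ring, Nat.doubleFactorial_two_mul]

lemma Nat.doubleFactorial_two_mul_sub_one_mul_two_pow (k : ℕ) :
    (2 * k - 1).doubleFactorial * 2 ^ k = (2 * k).choose k * k.factorial := by
  refine Nat.eq_of_mul_eq_mul_right k.factorial_pos ?_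
  have hchoose := Nat.choose_mul_factorial_mul_factorial (by omega : k ≤ 2 * k)
  rw [show 2 * k - k = k by omega] at hchoose
  rw [hchoose, ← Nat.two_pow_mul_factorial_mul_doubleFactorial]
  ring

lemma tendsto_choose_div_pow (k : ℕ) :
    Tendsto (fun N : ℕ => (N.choose k : ℝ) / (N : ℝ) ^ k) atTop (𝓝 (k.factorial : ℝ)⁻¹) := by
  refine ((isEquivalent_choose k).div (Asymptotics.IsEquivalent.refl)).symm.tendsto_nhds ?_
  refine tendsto_const_nhds.congr' ?_
  filter_upwards [eventually_ne_atTop 0] with N hN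
  simp only [Pi.div_apply]
  field_simp

lemma tendsto_monotonePairingCount_div_sqrt_pow (k : ℕ) :
    Tendsto (fun N : ℕ => (monotonePairingCount N (2 * k) : ℂ) / ((√N : ℝ) : ℂ) ^ (2 * k))
      atTop (𝓝 ((2 * k).choose k / 2 ^ k)) := by
  have hlim : ((2 * k).choose k / 2 ^ k : ℂ) =
      (((2 * k - 1).doubleFactorial * (k.factorial : ℝ)⁻¹ : ℝ) : ℂ) := by
    have := congrArg (Nat.cast : ℕ → ℂ) (Nat.doubleFactorial_two_mul_sub_one_mul_two_pow k)
    push_cast at this ⊢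
    field_simp
    rw [eq_div_iff (Nat.cast_ne_zero.2 k.factorial_ne_zero)]
    linear_combination -this
  rw [hlim]
  refine ((Complex.continuous_ofReal.tendsto _).comp
    ((tendsto_choose_div_pow k).const_mul ((2 * k - 1).doubleFactorial : ℝ))).congr fun N => ?_
  simp only [Function.comp_apply, monotonePairingCount_two_mul, pow_mul,
    ← Complex.ofReal_pow, Real.sq_sqrt (Nat.cast_nonneg N)]
  push_cast
  ring

lemma tendsto_div_sqrt_pow_of_norm_le {u : ℕ → ℂ} {C : ℝ} {m : ℕ} (hm : 1 ≤ m)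
    (hu : ∀ N, ‖u N‖ ≤ C * (N : ℝ) ^ ((m - 1) / 2)) :
    Tendsto (fun N : ℕ => u N / ((√N : ℝ) : ℂ) ^ m) atTop (𝓝 0) := by
  refine squeeze_zero_norm' (a := fun N : ℕ => C / √(N : ℝ)) ?_
    (tendsto_const_nhds.div_atTop (Real.tendsto_sqrt_atTop.comp tendsto_natCast_atTop_atTop))
  filter_upwards [eventually_ge_atTop 1] with N hN
  have hs : 1 ≤ √(N : ℝ) := Real.one_le_sqrt.2 (by exact_mod_cast hN)
  have hpow : (N : ℝ) ^ ((m - 1) / 2) * √N ≤ √N ^ m := by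
    calc (N : ℝ) ^ ((m - 1) / 2) * √N = √N ^ (2 * ((m - 1) / 2) + 1) := by
          rw [pow_succ, pow_mul, Real.sq_sqrt (Nat.cast_nonneg N)]
      _ ≤ √N ^ m := pow_le_pow_right₀ hs (by omega)
  rw [norm_div, norm_pow, Complex.norm_real, Real.norm_of_nonneg (Real.sqrt_nonneg _),
    div_le_div_iff₀ (by positivity) (by positivity)]
  calc ‖u N‖ * √N ≤ C * (N : ℝ) ^ ((m - 1) / 2) * √N := by gcongr; exact hu N
    _ ≤ C * √N ^ m := by
      rw [mul_assoc]
      exact mul_le_mul_of_nonneg_left hpow ((norm_nonneg _).trans (hu 1) |>.trans_eq (by simp))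

theorem stmt16_general {𝒜 : Type*} [Ring 𝒜] [Algebra ℂ 𝒜] (φ : 𝒜 →ₗ[ℂ] ℂ)
    (a : (N : ℕ) → Fin N → 𝒜) (E : (N : ℕ) → Fin N → Fin N → Prop)
    (horder : ∀ N (v w : Fin N), E N v w ↔ w < v)
    (hmean : ∀ N i, φ (a N i) = 0)
    (hvar : ∀ N i, φ (a N i * a N i) = 1)
    (hindep : ∀ N, BMTIndepVars φ (E N) (a N))
    (hmom : ∀ n : ℕ, ∃ C : ℝ, ∀ N, ∀ i : Fin N, ‖φ (a N i ^ n)‖ ≤ C) :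
    (∀ k : ℕ, 1 ≤ k →
      Tendsto
        (fun N : ℕ => φ ((∑ i : Fin N, a N i) ^ (2 * k)) / ((Real.sqrt N : ℝ) : ℂ) ^ (2 * k))
        atTop (nhds (((2 * k).choose k : ℂ) / 2 ^ k))) ∧
    (∀ m : ℕ, Odd m →
      Tendsto (fun N : ℕ => φ ((∑ i : Fin N, a N i) ^ m) / ((Real.sqrt N : ℝ) : ℂ) ^ m)
        atTop (nhds 0)) := by
  have error_term : ∀ m, 1 ≤ m → Tendsto (fun N : ℕ =>
      (φ ((∑ i, a N i) ^ m) - monotonePairingCount N m) / ((√N : ℝ) : ℂ) ^ m) atTop (𝓝 0) := by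
    intro m hm
    obtain ⟨C, hC₁, hC⟩ := exists_one_le_forall_le_of_forall_exists_le
      (f := fun n (p : (N : ℕ) × Fin N) => ‖φ (a p.1 p.2 ^ n)‖)
      (fun n => (hmom n).imp fun C hC p => hC p.1 p.2) m
    exact tendsto_div_sqrt_pow_of_norm_le hm fun N =>
      norm_map_sum_pow_sub_monotonePairingCount_le (horder N) (hmean N) (hvar N) (hindep N) hm hC₁
        fun n hn i => hC n hn ⟨N, i⟩
  refine ⟨fun k hk => ?_, fun m hm => ?_⟩
  · simpa [← add_div] using
      (tendsto_monotonePairingCount_div_sqrt_pow k).add (error_term (2 * k) (by omega))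
  · simpa [monotonePairingCount_of_odd hm] using error_term m hm.pos

/-- monotone central limit theorem. For BMT independence with respect to the
digraphs with edge set `{(j,i) : i < j}`, the normalized sums converge in moments to the
arcsine distribution on `(-√2, √2)`: even moments `(2k choose k)/2^k`, odd moments `0`. -/
theorem stmt16 {𝒜 : Type*} [Ring 𝒜] [Algebra ℂ 𝒜] (φ : 𝒜 →ₗ[ℂ] ℂ) (hφ : φ 1 = 1)
    (a : (N : ℕ) → Fin N → 𝒜) (E : (N : ℕ) → Fin N → Fin N → Prop)
    (horder : ∀ N (v w : Fin N), E N v w ↔ w < v)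
    (hmean : ∀ N i, φ (a N i) = 0)
    (hvar : ∀ N i, φ (a N i * a N i) = 1)
    (hindep : ∀ N, BMTIndepVars φ (E N) (a N))
    (hmom : ∀ n : ℕ, ∃ C : ℝ, ∀ N, ∀ i : Fin N, ‖φ (a N i ^ n)‖ ≤ C) :
    (∀ k : ℕ, 1 ≤ k →
      Tendsto
        (fun N : ℕ => φ ((∑ i : Fin N, a N i) ^ (2 * k)) / ((Real.sqrt N : ℝ) : ℂ) ^ (2 * k))
        atTop (nhds (((2 * k).choose k : ℂ) / 2 ^ k))) ∧
    (∀ m : ℕ, Odd m →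
      Tendsto (fun N : ℕ => φ ((∑ i : Fin N, a N i) ^ m) / ((Real.sqrt N : ℝ) : ℂ) ^ m)
        atTop (nhds 0)) :=
  stmt16_general φ a E horder hmean hvar hindep hmom
end
end

section
/- Let (𝒜, φ) be a non-commutative probability space, λ ∈ ℝ, and for each N ≥ 1 let a_1, …, a_N ∈ 𝒜 be BMT independent with respect to a digraph G_N = ([N], E_N), with each a_i having Bernoulli distribution μ_N = (1 − λ/N) δ_0 + (λ/N) δ_1, i.e., φ(a_i^n) = λ/N for every n ≥ 1. Then for each integer m ≥ 1 there exists a constant C such that for all N ≥ 1: |φ((a_1 + ⋯ + a_N)^m) − Σ_{π ∈ P(m)} λ^{#(π)} N^{−#(π)} · #{ i : [m] → [N] : ker[i] = π and every edge of G_{π(i)} is an edge of G_N }| ≤ C · N^{−1}, where the sum is over all partitions π of [m] and #(π) is the number of blocks of π. -/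
open scoped Classical
open Filter

noncomputable section

section Aux

variable {m : ℕ} {V : Type*}

lemma kerBlocks_block_eq {f : Fin m → V} {B : Finset (Fin m)} (hB : B ∈ kerBlocks f)
    {j : Fin m} (hj : j ∈ B) : B = Finset.univ.filter fun k' => f j = f k' := by
  obtain ⟨k₀, -, rfl⟩ := Finset.mem_image.1 hB
  have hj' : f k₀ = f j := (Finset.mem_filter.1 hj).2
  ext k'
  simp [Finset.mem_filter, hj']

lemma kerBlocks_const {f : Fin m → V} {B : Finset (Fin m)} (hB : B ∈ kerBlocks f)
    {j j' : Fin m} (hj : j ∈ B) (hj' : j' ∈ B) : f j = f j' := by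
  rw [kerBlocks_block_eq hB hj] at hj'
  exact (Finset.mem_filter.1 hj').2

lemma self_mem_kerBlock (f : Fin m → V) (k : Fin m) :
    k ∈ Finset.univ.filter fun k' => f k = f k' := by simp

lemma kerBlock_mem (f : Fin m → V) (k : Fin m) :
    (Finset.univ.filter fun k' => f k = f k') ∈ kerBlocks f :=
  Finset.mem_image.2 ⟨k, Finset.mem_univ k, rfl⟩

lemma kerGRelOn_refl (E : V → V → Prop) (f : Fin m → V) (S : Finset (Fin m)) (k : Fin m) :
    kerGRelOn E f S k k :=
  ⟨rfl, fun l _ h1 h2 _ => absurd (h1.trans h2) (by simp)⟩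

lemma self_mem_kerGBlock (E : V → V → Prop) (f : Fin m → V) (k : Fin m) :
    k ∈ Finset.univ.filter fun k' => kerGRelOn E f Finset.univ k k' := by
  simp [kerGRelOn_refl]

lemma kerG_eq_ker_of_cond {E : V → V → Prop} {f : Fin m → V}
    (hc : ∀ p ∈ nestCrossEdges (kerBlocks f) f, E p.1 p.2) :
    kerGBlocks E f Finset.univ = kerBlocks f := by
  unfold kerGBlocks kerBlocks
  apply Finset.image_congr
  intro k _
  ext k'
  simp only [Finset.mem_filter, Finset.mem_univ, true_and]
  constructor
  · exact fun h => h.1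
  · intro hval
    refine ⟨hval, fun l _ h1 h2 hne => ?_⟩
    refine hc (f l, f k) ?_
    refine ⟨Finset.univ.filter fun j => f l = f j, kerBlock_mem f l,
      Finset.univ.filter fun j => f k = f j, kerBlock_mem f k, ?_, ?_, ?_, ?_⟩
    · intro hEq
      have : k ∈ Finset.univ.filter fun j => f l = f j := by
        rw [hEq]; exact self_mem_kerBlock f k
      exact hne (Finset.mem_filter.1 this).2
    · refine ⟨l, self_mem_kerBlock f l, min k k', ?_, max k k', ?_, h1, h2⟩
      · simp only [Finset.mem_filter, Finset.mem_univ, true_and]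
        rcases le_total k k' with h | h
        · rw [min_eq_left h]
        · rw [min_eq_right h]; exact hval
      · simp only [Finset.mem_filter, Finset.mem_univ, true_and]
        rcases le_total k k' with h | h
        · rw [max_eq_right h]; exact hval
        · rw [max_eq_left h]
    · exact ⟨l, self_mem_kerBlock f l, rfl⟩
    · exact ⟨k, self_mem_kerBlock f k, rfl⟩

/-- The map collapsing a `kerG` block onto the plain kernel block of its minimum. -/
def collapseMap (f : Fin m → V) : Finset (Fin m) → Finset (Fin m) :=
  fun B => if h : B.Nonempty then Finset.univ.filter fun j => f (B.min' h) = f j else ∅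

lemma collapse_kerGBlock (E : V → V → Prop) (f : Fin m → V) (k : Fin m) :
    collapseMap f (Finset.univ.filter fun k' => kerGRelOn E f Finset.univ k k')
      = Finset.univ.filter fun j => f k = f j := by
  set B := Finset.univ.filter fun k' => kerGRelOn E f Finset.univ k k' with hBdef
  have hk : k ∈ B := self_mem_kerGBlock E f k
  have hne : B.Nonempty := ⟨k, hk⟩
  have hrel : kerGRelOn E f Finset.univ k (B.min' hne) :=
    (Finset.mem_filter.1 (B.min'_mem hne)).2
  have hv : f k = f (B.min' hne) := hrel.1
  rw [collapseMap, dif_pos hne]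
  ext j
  simp [← hv]

lemma kerBlocks_eq_image_collapse (E : V → V → Prop) (f : Fin m → V) :
    kerBlocks f = (kerGBlocks E f Finset.univ).image (collapseMap f) := by
  unfold kerGBlocks
  rw [Finset.image_image]
  unfold kerBlocks
  apply Finset.image_congr
  intro k _
  exact (collapse_kerGBlock E f k).symm

lemma card_kerBlocks_le (E : V → V → Prop) (f : Fin m → V) :
    (kerBlocks f).card ≤ (kerGBlocks E f Finset.univ).card := by
  rw [kerBlocks_eq_image_collapse E f]
  exact Finset.card_image_le

lemma card_kerBlocks_lt_of_not_cond {E : V → V → Prop} {f : Fin m → V}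
    (hc : ¬ ∀ p ∈ nestCrossEdges (kerBlocks f) f, E p.1 p.2) :
    (kerBlocks f).card + 1 ≤ (kerGBlocks E f Finset.univ).card := by
  push_neg at hc
  obtain ⟨p, hp, hnE⟩ := hc
  obtain ⟨B, hB, C, hC, hBC, ⟨l, hl, c₁, hc₁, c₂, hc₂, h1, h2⟩, ⟨k, hk, hfk⟩, ⟨k', hk', hfk'⟩⟩ := hp
  have hp1 : f l = p.1 := by rw [← hfk]; exact kerBlocks_const hB hl hk
  have hp2 : f c₁ = p.2 := by rw [← hfk']; exact kerBlocks_const hC hc₁ hk'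
  have hflc : f l ≠ f c₁ := by
    intro h
    apply hBC
    rw [kerBlocks_block_eq hB hl, kerBlocks_block_eq hC hc₁, h]
  have hc12 : c₁ < c₂ := h1.trans h2
  have hnrel : ¬ kerGRelOn E f Finset.univ c₁ c₂ := by
    intro hrel
    apply hnE
    rw [← hp1, ← hp2]
    exact hrel.2 l (Finset.mem_univ l)
      (by rw [min_eq_left hc12.le]; exact h1)
      (by rw [max_eq_right hc12.le]; exact h2) hflc
  set H₁ := Finset.univ.filter fun j => kerGRelOn E f Finset.univ c₁ j with hH₁
  set H₂ := Finset.univ.filter fun j => kerGRelOn E f Finset.univ c₂ j with hH₂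
  have hHne : H₁ ≠ H₂ := by
    intro hEq
    apply hnrel
    have : c₂ ∈ H₁ := by rw [hEq]; exact self_mem_kerGBlock E f c₂
    exact (Finset.mem_filter.1 this).2
  have hG1 : collapseMap f H₁ = Finset.univ.filter fun j => f c₁ = f j :=
    collapse_kerGBlock E f c₁
  have hG2 : collapseMap f H₂ = Finset.univ.filter fun j => f c₂ = f j :=
    collapse_kerGBlock E f c₂
  have hv12 : f c₁ = f c₂ := kerBlocks_const hC hc₁ hc₂
  have hGeq : collapseMap f H₁ = collapseMap f H₂ := by
    rw [hG1, hG2, hv12]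
  have hmem1 : H₁ ∈ kerGBlocks E f Finset.univ := Finset.mem_image.2 ⟨c₁, Finset.mem_univ _, rfl⟩
  have hmem2 : H₂ ∈ kerGBlocks E f Finset.univ := Finset.mem_image.2 ⟨c₂, Finset.mem_univ _, rfl⟩
  have hnotinj : ¬ Set.InjOn (collapseMap f) (kerGBlocks E f Finset.univ : Set (Finset (Fin m))) := by
    intro hinj
    exact hHne (hinj (by exact_mod_cast hmem1) (by exact_mod_cast hmem2) hGeq)
  have hlt : ((kerGBlocks E f Finset.univ).image (collapseMap f)).card
      < (kerGBlocks E f Finset.univ).card := by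
    refine lt_of_le_of_ne Finset.card_image_le ?_
    intro hEq
    exact hnotinj (Finset.card_image_iff.1 hEq)
  rw [kerBlocks_eq_image_collapse E f]
  omega

lemma blockProd_eq_pow_s19 {A : Type*} [Monoid A] (g : V → A) (f : Fin m → V)
    {B : Finset (Fin m)} (v : V) (hv : ∀ k ∈ B, f k = v) :
    blockProd (fun k => g (f k)) B = g v ^ B.card := by
  unfold blockProd
  rw [List.prod_eq_pow_card _ (g v) ?_, List.length_map, Finset.length_sort]
  intro y hy
  simp only [List.mem_map] at hy
  obtain ⟨k, hk, rfl⟩ := hy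
  rw [hv k (by rwa [← Finset.mem_sort (α := Fin m) (· ≤ ·)])]

lemma sum_pow_eq {A ι : Type*} [Semiring A] [Fintype ι] (x : ι → A) :
    ∀ m : ℕ, (∑ i, x i) ^ m = ∑ f : Fin m → ι, (List.ofFn fun k => x (f k)).prod := by
  intro m
  induction m with
  | zero => simp
  | succ n ih =>
    have key : ∑ f : Fin (n + 1) → ι, (List.ofFn fun k => x (f k)).prod
        = ∑ p : ι × (Fin n → ι), x p.1 * (List.ofFn fun k => x (p.2 k)).prod := by
      refine (Fintype.sum_equiv (Fin.consEquiv fun _ => ι) _ _ ?_).symm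
      intro p
      rw [List.ofFn_succ, List.prod_cons]
      simp [Fin.consEquiv]
    rw [key, Fintype.sum_prod_type, pow_succ', ih, Finset.sum_mul_sum]

lemma fiber_card_le {N : ℕ} (hm : 1 ≤ m) (π : Finset (Finset (Fin m))) :
    (Finset.univ.filter fun idx : Fin m → Fin N => kerBlocks idx = π).card ≤ N ^ π.card := by
  set rep : Finset (Fin m) → Fin m := fun B => if h : B.Nonempty then B.min' h else ⟨0, hm⟩
  set Φ : (Fin m → Fin N) → ({B // B ∈ π} → Fin N) := fun idx B => idx (rep B.1) with hΦ
  have hinj : Set.InjOn Φ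
      ((Finset.univ.filter fun idx : Fin m → Fin N => kerBlocks idx = π) : Set (Fin m → Fin N)) := by
    intro idx hidx idx' hidx' hEq
    rw [Finset.mem_coe, Finset.mem_filter] at hidx hidx'
    funext k
    set B := @Finset.filter _ (fun k' => idx k = idx k')
      (fun a => Classical.propDecidable _) Finset.univ with hB
    have hBmem : B ∈ kerBlocks idx := by rw [hB]; exact kerBlock_mem idx k
    have hBπ : B ∈ π := hidx.2 ▸ hBmem
    have hkB : k ∈ B := by rw [hB]; exact self_mem_kerBlock idx k
    have hne : B.Nonempty := ⟨k, hkB⟩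
    have hrepB : rep B ∈ B := by
      simp only [rep, dif_pos hne]
      exact B.min'_mem hne
    have hval : idx k = idx (rep B) := kerBlocks_const hBmem hkB hrepB
    have hBmem' : B ∈ kerBlocks idx' := by rw [hidx'.2]; exact hBπ
    have hval' : idx' (rep B) = idx' k := kerBlocks_const hBmem' hrepB hkB
    have := congrFun hEq ⟨B, hBπ⟩
    simp only [hΦ] at this
    rw [hval, this, hval']
  have hcard := Finset.card_le_card_of_injOn Φ (fun _ _ => Finset.mem_univ _) hinj
  rw [Finset.card_univ] at hcard
  simpa [Fintype.card_fun, Fintype.card_coe] using hcard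

end Aux

/-- Poisson limit theorem, with explicit error term of order `N^{-1}`.
The main term `Σ_{π ∈ P(m)} λ^{#π} N^{-#π} #{i : ker[i] = π, G_{π(i)} ⊆ G_N}` is written
equivalently as a sum over all `i : [m] → [N]`, grouped by `π = ker[i]`. -/
theorem stmt19 {𝒜 : Type*} [Ring 𝒜] [Algebra ℂ 𝒜] (φ : 𝒜 →ₗ[ℂ] ℂ) (hφ : φ 1 = 1)
    (lam : ℝ)
    (a : (N : ℕ) → Fin N → 𝒜) (E : (N : ℕ) → Fin N → Fin N → Prop)
    (hE : ∀ N v, ¬ E N v v)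
    (hindep : ∀ N, BMTIndepVars φ (E N) (a N))
    (hdist : ∀ N, ∀ i : Fin N, ∀ n : ℕ, 1 ≤ n → φ (a N i ^ n) = (lam : ℂ) / N) :
    ∀ m : ℕ, 1 ≤ m → ∃ C : ℝ, ∀ N : ℕ, 1 ≤ N →
      ‖φ ((∑ i : Fin N, a N i) ^ m)
        - ∑ idx : Fin m → Fin N,
            (if ∀ p ∈ nestCrossEdges (kerBlocks idx) idx, E N p.1 p.2 then
              (lam : ℂ) ^ (kerBlocks idx).card / (N : ℂ) ^ (kerBlocks idx).card
            else 0)‖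
        ≤ C / N := by
  intro m hm
  set M : ℝ := max |lam| 1 with hMdef
  have hM1 : (1 : ℝ) ≤ M := le_max_right _ _
  have hM0 : (0 : ℝ) ≤ M := zero_le_one.trans hM1
  refine ⟨M ^ m * (Fintype.card (Finset (Finset (Fin m))) : ℝ), ?_⟩
  intro N hN
  have hN0 : (0 : ℝ) < N := by exact_mod_cast hN
  have hN1 : (1 : ℝ) ≤ N := by exact_mod_cast hN
  -- Step 1: expand the moment via BMT independence and the Bernoulli distribution
  have expand : φ ((∑ i : Fin N, a N i) ^ m)
      = ∑ idx : Fin m → Fin N, ((lam : ℂ) / N) ^ (kerGBlocks (E N) idx Finset.univ).card := by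
    rw [sum_pow_eq, map_sum]
    refine Finset.sum_congr rfl fun idx _ => ?_
    rw [hindep N m idx]
    have hblk : ∀ B ∈ kerGBlocks (E N) idx Finset.univ,
        φ (blockProd (fun k => a N (idx k)) B) = (lam : ℂ) / N := by
      intro B hB
      obtain ⟨k₀, -, rfl⟩ := Finset.mem_image.1 hB
      have hmem := self_mem_kerGBlock (E N) idx k₀
      rw [blockProd_eq_pow_s19 (a N) idx (idx k₀)
        (fun k hk => ((Finset.mem_filter.1 hk).2).1.symm)]
      exact hdist N (idx k₀) _ (Finset.card_pos.2 ⟨k₀, hmem⟩)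
    rw [Finset.prod_congr rfl hblk, Finset.prod_const]
  rw [expand, ← Finset.sum_sub_distrib]
  -- pointwise bound
  have hpoint : ∀ idx : Fin m → Fin N,
      ‖((lam : ℂ) / N) ^ (kerGBlocks (E N) idx Finset.univ).card
        - (if ∀ p ∈ nestCrossEdges (kerBlocks idx) idx, E N p.1 p.2 then
            (lam : ℂ) ^ (kerBlocks idx).card / (N : ℂ) ^ (kerBlocks idx).card
          else 0)‖
      ≤ M ^ m / (N : ℝ) ^ ((kerBlocks idx).card + 1) := by
    intro idx
    by_cases hcond : ∀ p ∈ nestCrossEdges (kerBlocks idx) idx, E N p.1 p.2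
    · rw [if_pos hcond, kerG_eq_ker_of_cond hcond, div_pow, sub_self, norm_zero]
      positivity
    · rw [if_neg hcond, sub_zero]
      have hcG_le : (kerGBlocks (E N) idx Finset.univ).card ≤ m :=
        le_trans Finset.card_image_le (by simp)
      have hcG_ge : (kerBlocks idx).card + 1 ≤ (kerGBlocks (E N) idx Finset.univ).card :=
        card_kerBlocks_lt_of_not_cond hcond
      rw [norm_pow, norm_div, Complex.norm_real, Real.norm_eq_abs, Complex.norm_natCast,
        div_pow]
      refine div_le_div₀ (by positivity) ?_ (by positivity) ?_
      · calc |lam| ^ (kerGBlocks (E N) idx Finset.univ).card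
            ≤ M ^ (kerGBlocks (E N) idx Finset.univ).card :=
              pow_le_pow_left₀ (abs_nonneg _) (le_max_left _ _) _
          _ ≤ M ^ m := pow_le_pow_right₀ hM1 hcG_le
      · exact pow_le_pow_right₀ hN1 hcG_ge
  -- sum bound
  have hsum : ∑ idx : Fin m → Fin N, ((1 : ℝ) / N) ^ (kerBlocks idx).card
      ≤ (Fintype.card (Finset (Finset (Fin m))) : ℝ) := by
    rw [Finset.sum_comp (fun π : Finset (Finset (Fin m)) => ((1 : ℝ) / N) ^ π.card) kerBlocks]
    calc ∑ π ∈ Finset.univ.image (kerBlocks (V := Fin N)),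
          (Finset.univ.filter fun idx : Fin m → Fin N => kerBlocks idx = π).card
            • ((1 : ℝ) / N) ^ π.card
        ≤ ∑ π ∈ Finset.univ.image (kerBlocks (V := Fin N)), 1 := by
          refine Finset.sum_le_sum fun π _ => ?_
          rw [nsmul_eq_mul]
          have h1 : ((Finset.univ.filter fun idx : Fin m → Fin N =>
              kerBlocks idx = π).card : ℝ) ≤ (N : ℝ) ^ π.card := by
            exact_mod_cast fiber_card_le hm π
          calc ((Finset.univ.filter fun idx : Fin m → Fin N =>
                kerBlocks idx = π).card : ℝ) * ((1 : ℝ) / N) ^ π.card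
              ≤ (N : ℝ) ^ π.card * ((1 : ℝ) / N) ^ π.card := by
                exact mul_le_mul_of_nonneg_right h1 (by positivity)
            _ = 1 := by
                rw [div_pow, one_pow, mul_one_div, div_self (by positivity)]
      _ ≤ (Fintype.card (Finset (Finset (Fin m))) : ℝ) := by
          rw [Finset.sum_const, nsmul_eq_mul, mul_one]
          exact_mod_cast Finset.card_le_univ _
  calc ‖∑ idx : Fin m → Fin N,
        (((lam : ℂ) / N) ^ (kerGBlocks (E N) idx Finset.univ).card
          - (if ∀ p ∈ nestCrossEdges (kerBlocks idx) idx, E N p.1 p.2 then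
              (lam : ℂ) ^ (kerBlocks idx).card / (N : ℂ) ^ (kerBlocks idx).card
            else 0))‖
      ≤ ∑ idx : Fin m → Fin N,
          ‖((lam : ℂ) / N) ^ (kerGBlocks (E N) idx Finset.univ).card
            - (if ∀ p ∈ nestCrossEdges (kerBlocks idx) idx, E N p.1 p.2 then
                (lam : ℂ) ^ (kerBlocks idx).card / (N : ℂ) ^ (kerBlocks idx).card
              else 0)‖ := norm_sum_le _ _
    _ ≤ ∑ idx : Fin m → Fin N, M ^ m / (N : ℝ) ^ ((kerBlocks idx).card + 1) :=
        Finset.sum_le_sum fun idx _ => hpoint idx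
    _ = (M ^ m / N) * ∑ idx : Fin m → Fin N, ((1 : ℝ) / N) ^ (kerBlocks idx).card := by
        rw [Finset.mul_sum]
        refine Finset.sum_congr rfl fun idx _ => ?_
        rw [div_pow, one_pow, pow_succ]
        field_simp
    _ ≤ (M ^ m / N) * (Fintype.card (Finset (Finset (Fin m))) : ℝ) := by
        exact mul_le_mul_of_nonneg_left hsum (by positivity)
    _ = M ^ m * (Fintype.card (Finset (Finset (Fin m))) : ℝ) / N := by ring

end
end
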